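/- arXiv:2104.01450 — 7 statements merged into one kernel-verified Lean document; each statement's English description precedes it below -/
import Mathlib

section
/- For m a positive integer and probabilities p_0,...,p_m summing to 1, define p(u,v) = p_u * p_{m-v} if u+v ≠ m, and p(u,v) = p_u^2 - p_u if u+v = m. Then for any g, h with 0 ≤ g, h ≤ m and g+h < m, the sum W(g,h) = Σ_{u=0}^{g} Σ_{v=0}^{h} p(u,v) equals Q_g * (1 - Q_{m-h-1}), where Q_u = p_0 + ... + p_u; in particular W(g,h) ≥ 0. -/
/-! Below the anti-diagonal `u + v = m` every term is the product `p u * p (m - v)`, so `W(g, h)`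
factors as `Q_g * ∑_{v ≤ h} p (m - v)`; reflecting the second factor turns it into the tail
`∑_{m - h ≤ t ≤ m} p t = 1 - Q_{m-h-1}`, a sum of nonnegative terms. -/

open Finset

theorem Finset.sum_range_succ_reflect_eq_sub {G : Type*} [AddCommGroup G] (f : ℕ → G) {h m : ℕ}
    (hh : h ≤ m) :
    ∑ v ∈ range (h + 1), f (m - v) = ∑ t ∈ range (m + 1), f t - ∑ t ∈ range (m - h), f t := by
  rw [← sum_Ico_eq_sub _ (by omega), range_eq_Ico, sum_Ico_reflect _ _ (by omega)]
  congr 2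
  omega

theorem Finset.sum_sum_ite_add_eq_of_lt {R : Type*} [CommSemiring R] (p d : ℕ → R)
    {g h m : ℕ} (hgh : g + h < m) :
    ∑ u ∈ range (g + 1), ∑ v ∈ range (h + 1), (if u + v = m then d u else p u * p (m - v))
      = (∑ u ∈ range (g + 1), p u) * ∑ v ∈ range (h + 1), p (m - v) := by
  rw [sum_mul_sum]
  refine sum_congr rfl fun u hu => sum_congr rfl fun v hv => if_neg ?_
  rw [mem_range] at hu hv
  omega

theorem stmt0_general (m : ℕ) (p : ℕ → ℝ) (hp : ∀ u, 0 ≤ p u)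
    (hsum : ∑ u ∈ Finset.range (m + 1), p u = 1)
    (g h : ℕ) (hgh : g + h < m) :
    (∑ u ∈ Finset.range (g + 1), ∑ v ∈ Finset.range (h + 1),
        (if u + v = m then p u ^ 2 - p u else p u * p (m - v)))
      = (∑ t ∈ Finset.range (g + 1), p t) * (1 - ∑ t ∈ Finset.range (m - h), p t) ∧
    0 ≤ ∑ u ∈ Finset.range (g + 1), ∑ v ∈ Finset.range (h + 1),
        (if u + v = m then p u ^ 2 - p u else p u * p (m - v)) := by
  rw [sum_sum_ite_add_eq_of_lt p (fun u => p u ^ 2 - p u) hgh]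
  refine ⟨?_, mul_nonneg (sum_nonneg fun u _ => hp u) (sum_nonneg fun v _ => hp (m - v))⟩
  rw [sum_range_succ_reflect_eq_sub p (by omega), hsum]

theorem stmt0 (m : ℕ) (hm : 1 ≤ m) (p : ℕ → ℝ) (hp : ∀ u, 0 ≤ p u)
    (hsum : ∑ u ∈ Finset.range (m + 1), p u = 1)
    (g h : ℕ) (hg : g ≤ m) (hh : h ≤ m) (hgh : g + h < m) :
    (∑ u ∈ Finset.range (g + 1), ∑ v ∈ Finset.range (h + 1),
        (if u + v = m then p u ^ 2 - p u else p u * p (m - v)))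
      = (∑ t ∈ Finset.range (g + 1), p t) * (1 - ∑ t ∈ Finset.range (m - h), p t) ∧
    0 ≤ ∑ u ∈ Finset.range (g + 1), ∑ v ∈ Finset.range (h + 1),
        (if u + v = m then p u ^ 2 - p u else p u * p (m - v)) :=
  stmt0_general m p hp hsum g h hgh
end

section
/- With notation as above, if 0 ≤ g, h < m then W(g, h) = W(m-1-h, m-1-g). -/
open Finset

private lemma key (m g a : ℕ) (hg : g < m) (ha : a < m) (p : ℕ → ℝ)
    (hsum : ∑ u ∈ Finset.range (m + 1), p u = 1) :
    ∑ u ∈ Finset.range (g + 1), ∑ v ∈ Finset.range (m - a),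
        (if u + v = m then p u ^ 2 - p u else p u * p (m - v))
      = (∑ u ∈ Finset.range (min g a + 1), p u)
        - (∑ u ∈ Finset.range (g + 1), p u) * (∑ u ∈ Finset.range (a + 1), p u) := by
  -- rewrite summand
  have hrw : ∀ u ∈ Finset.range (g + 1), ∀ v ∈ Finset.range (m - a),
      (if u + v = m then p u ^ 2 - p u else p u * p (m - v))
        = p u * p (m - v) - (if v = m - u then p u else 0) := by
    intro u hu v hv
    simp only [Finset.mem_range] at hu hv
    by_cases huv : u + v = m
    · have h1 : m - v = u := by omega
      have h2 : v = m - u := by omega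
      rw [if_pos huv, if_pos h2, h1]; ring
    · have h2 : v ≠ m - u := by omega
      simp [huv, h2]
  rw [Finset.sum_congr rfl (fun u hu => Finset.sum_congr rfl (hrw u hu))]
  simp only [Finset.sum_sub_distrib]
  have h4 : ∑ v ∈ Finset.range (m - a), p (m - v) = ∑ w ∈ Finset.Ico (a + 1) (m + 1), p w := by
    apply Finset.sum_nbij' (fun v => m - v) (fun w => m - w) <;>
      intros x hx <;> simp only [Finset.mem_range, Finset.mem_Ico] at * <;>
      first | omega | (congr 1; omega)
  have h5 : ∑ u ∈ Finset.range (a + 1), p u + ∑ w ∈ Finset.Ico (a + 1) (m + 1), p w = 1 := by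
    rw [Finset.range_eq_Ico, Finset.sum_Ico_consecutive p (by omega) (by omega)]
    rw [← Finset.range_eq_Ico]; exact hsum
  have h6 : ∀ u ∈ Finset.range (g + 1),
      (∑ v ∈ Finset.range (m - a), if v = m - u then p u else 0)
        = if a < u then p u else 0 := by
    intro u hu
    simp only [Finset.mem_range] at hu
    rw [Finset.sum_ite_eq' (Finset.range (m - a)) (m - u) (fun _ => p u)]
    by_cases hau : a < u
    · rw [if_pos hau, if_pos]; simp only [Finset.mem_range]; omega
    · rw [if_neg hau, if_neg]; simp only [Finset.mem_range]; omega
  rw [Finset.sum_congr rfl h6]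
  have h7 : ∑ u ∈ Finset.range (g + 1), (if a < u then p u else 0)
      = ∑ u ∈ Finset.range (g + 1), p u - ∑ u ∈ Finset.range (min g a + 1), p u := by
    have := Finset.sum_filter_add_sum_filter_not (Finset.range (g + 1)) (fun u => a < u) p
    have hfil : Finset.filter (fun u => ¬ a < u) (Finset.range (g + 1))
        = Finset.range (min g a + 1) := by
      ext x; simp only [Finset.mem_filter, Finset.mem_range, not_lt]; omega
    rw [← Finset.sum_filter, ← this, hfil]; ring
  rw [h7]
  have h9 : ∑ u ∈ Finset.range (g + 1), ∑ v ∈ Finset.range (m - a), p u * p (m - v)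
      = (∑ u ∈ Finset.range (g + 1), p u) * (1 - ∑ u ∈ Finset.range (a + 1), p u) := by
    simp_rw [← Finset.mul_sum]
    rw [← Finset.sum_mul]
    congr 1
    rw [h4]; linarith
  rw [h9]; ring

theorem stmt3 (m : ℕ) (hm : 1 ≤ m) (p : ℕ → ℝ) (hp : ∀ u, 0 ≤ p u)
    (hsum : ∑ u ∈ Finset.range (m + 1), p u = 1)
    (W : ℕ → ℕ → ℝ)
    (hW : ∀ g ≤ m, ∀ h ≤ m, W g h = ∑ u ∈ Finset.range (g + 1), ∑ v ∈ Finset.range (h + 1),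
        (if u + v = m then p u ^ 2 - p u else p u * p (m - v)))
    (g h : ℕ) (hg : g < m) (hh : h < m) :
    W g h = W (m - 1 - h) (m - 1 - g) := by
  have e1 : h + 1 = m - (m - 1 - h) := by omega
  have e2 : (m - 1 - g) + 1 = m - g := by omega
  rw [hW g (by omega) h (by omega), hW (m - 1 - h) (by omega) (m - 1 - g) (by omega)]
  rw [e1, e2]
  rw [key m g (m - 1 - h) hg (by omega) p hsum,
      key m (m - 1 - h) g (by omega) hg p hsum]
  rw [Nat.min_comm]; ring
end

section
/- With notation as above, W(g,h) ≥ 0 for all integers g, h with 0 ≤ g ≤ k₁ and 0 ≤ h ≤ k₂, for any nonnegative integers k₁, k₂ (where W(g,h) = Σ_{u=0}^{min(m,g)} Σ_{v=0}^{min(m,h)} p(u,v)). -/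
/-!
Since `p (m - v) = p u` whenever `u + v = m`, the summand of `W g h` is `p u * p (m - v)` minus
`p u` on the antidiagonal. With `a = min m g`, `b = min m h`, `X = {0, …, a}`, `Y = {m - b, …, m}`
and `P` the mass of `p`, this gives `W g h = P(X) P(Y) - P(X ∩ Y)`. Either `X` and `Y` are
disjoint, or they cover `{0, …, m}`, and then `P(X) P(Y) - P(X ∩ Y) = (1 - P(X)) (1 - P(Y)) ≥ 0`.
-/

open Finset

theorem sum_inter_le_sum_mul_sum {ι : Type*} [DecidableEq ι] {s t U : Finset ι} {p : ι → ℝ}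
    (hp : ∀ i ∈ U, 0 ≤ p i) (hU : ∑ i ∈ U, p i = 1) (hs : s ⊆ U) (ht : t ⊆ U)
    (hst : s ∪ t = U ∨ Disjoint s t) :
    ∑ i ∈ s ∩ t, p i ≤ (∑ i ∈ s, p i) * ∑ i ∈ t, p i := by
  have hs_nonneg : 0 ≤ ∑ i ∈ s, p i := sum_nonneg fun i hi => hp i (hs hi)
  have ht_nonneg : 0 ≤ ∑ i ∈ t, p i := sum_nonneg fun i hi => hp i (ht hi)
  rcases hst with hcover | hdisj
  · have hs_le : ∑ i ∈ s, p i ≤ 1 :=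
      hU ▸ sum_le_sum_of_subset_of_nonneg hs fun i hi _ => hp i hi
    have ht_le : ∑ i ∈ t, p i ≤ 1 :=
      hU ▸ sum_le_sum_of_subset_of_nonneg ht fun i hi _ => hp i hi
    have hincl_excl := sum_union_inter (s₁ := s) (s₂ := t) (f := p)
    rw [hcover, hU] at hincl_excl
    nlinarith [mul_nonneg (sub_nonneg.2 hs_le) (sub_nonneg.2 ht_le)]
  · rw [disjoint_iff_inter_eq_empty.1 hdisj, sum_empty]
    positivity

theorem range_union_Icc_eq_or_disjoint {a b m : ℕ} (ha : a ≤ m) :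
    range (a + 1) ∪ Icc (m - b) m = range (m + 1) ∨ Disjoint (range (a + 1)) (Icc (m - b) m) := by
  by_cases hab : m ≤ a + b + 1
  · left
    ext u
    simp only [mem_union, mem_range, mem_Icc]
    omega
  · right
    rw [disjoint_left]
    simp only [mem_range, mem_Icc]
    omega

section Antidiagonal

variable (m : ℕ) (p : ℕ → ℝ)

theorem antidiagonal_summand_eq (u v : ℕ) :
    (if u + v = m then p u ^ 2 - p u else p u * p (m - v)) =
      p u * p (m - v) - if u + v = m then p u else 0 := by
  split_ifs with huv
  · rw [show m - v = u by omega]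
    ring
  · ring

theorem sum_range_reflect_eq_sum_Icc {b : ℕ} (hb : b ≤ m) :
    ∑ v ∈ range (b + 1), p (m - v) = ∑ w ∈ Icc (m - b) m, p w :=
  sum_nbij' (m - ·) (m - ·) (by simp; omega) (by simp; omega) (by simp; omega) (by simp; omega)
    fun _ _ => rfl

theorem sum_range_sum_range_antidiagonal (a b : ℕ) :
    ∑ u ∈ range (a + 1), ∑ v ∈ range (b + 1), (if u + v = m then p u else 0) =
      ∑ u ∈ range (a + 1) ∩ Icc (m - b) m, p u := by
  rw [← sum_ite_mem]
  refine sum_congr rfl fun u _ => ?_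
  have hsingle : ∀ v ∈ range (b + 1), v ≠ m - u → (if u + v = m then p u else 0) = 0 := by
    intro v _ hv
    rw [if_neg (by omega)]
  by_cases hu : u ∈ Icc (m - b) m
  · have hmem : m - u ∈ range (b + 1) := mem_range.2 (by rw [mem_Icc] at hu; omega)
    rw [sum_eq_single_of_mem _ hmem hsingle, if_pos (by rw [mem_Icc] at hu; omega), if_pos hu]
  · rw [if_neg hu]
    refine sum_eq_zero fun v hv => if_neg ?_
    simp only [mem_Icc, mem_range] at hu hv
    omega

end Antidiagonal

theorem stmt4_general (m : ℕ) (p : ℕ → ℝ) (hp : ∀ u, 0 ≤ p u)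
    (hsum : ∑ u ∈ Finset.range (m + 1), p u = 1)
    (W : ℕ → ℕ → ℝ)
    (hW : ∀ g h, W g h = ∑ u ∈ Finset.range (min m g + 1), ∑ v ∈ Finset.range (min m h + 1),
        (if u + v = m then p u ^ 2 - p u else p u * p (m - v)))
    (g h : ℕ) :
    0 ≤ W g h := by
  have ha : min m g ≤ m := min_le_left _ _
  have hb : min m h ≤ m := min_le_left _ _
  have hW_eq : W g h = (∑ u ∈ range (min m g + 1), p u) * (∑ w ∈ Icc (m - min m h) m, p w) -
      ∑ u ∈ range (min m g + 1) ∩ Icc (m - min m h) m, p u := by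
    simp only [hW, antidiagonal_summand_eq, sum_sub_distrib, ← mul_sum, ← sum_mul,
      sum_range_reflect_eq_sum_Icc m p hb, sum_range_sum_range_antidiagonal]
  rw [hW_eq, sub_nonneg]
  exact sum_inter_le_sum_mul_sum (fun u _ => hp u) hsum (range_subset_range.2 (by omega))
    (fun u hu => by simp only [mem_Icc, mem_range] at hu ⊢; omega)
    (range_union_Icc_eq_or_disjoint ha)

theorem stmt4 (m : ℕ) (hm : 1 ≤ m) (p : ℕ → ℝ) (hp : ∀ u, 0 ≤ p u)
    (hsum : ∑ u ∈ Finset.range (m + 1), p u = 1)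
    (W : ℕ → ℕ → ℝ)
    (hW : ∀ g h, W g h = ∑ u ∈ Finset.range (min m g + 1), ∑ v ∈ Finset.range (min m h + 1),
        (if u + v = m then p u ^ 2 - p u else p u * p (m - v)))
    (k₁ k₂ : ℕ) (g h : ℕ) (hg : g ≤ k₁) (hh : h ≤ k₂) :
    0 ≤ W g h :=
  stmt4_general m p hp hsum W hW g h
end

section
/- Under the same setup, P(S₁' + X ≤ k₁, S₂' + Y ≤ k₂) ≤ P(S₁' + Y₁ ≤ k₁, S₂' + Y₂ ≤ k₂); that is, replacing the complementary pair (X, m−X) by an independent pair with the same marginals cannot decrease the joint lower-orthant probability. -/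
/-!
Conditioning on the value q of (S₁', S₂'), both probabilities become sums over q of
P((S₁', S₂') = q) times a lower-orthant probability of (X, m − X), resp. of (Y₁, Y₂).
For the complementary pair, {X ≤ a} and {m − X ≤ b} are a lower and an upper set of the
single variable X, so they are either disjoint or together cover Ω; in both cases
P(A ∩ B) ≤ P(A) P(B), and the right-hand side is the probability for the independent pair.
-/

open MeasureTheory ProbabilityTheory Set

lemma IsLowerSet.inter_eq_empty_or_union_eq_univ {α : Type*} [LinearOrder α] {s t : Set α}
    (hs : IsLowerSet s) (ht : IsUpperSet t) : s ∩ t = ∅ ∨ s ∪ t = univ := by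
  refine or_iff_not_imp_left.2 fun hst => ?_
  obtain ⟨x, hxs, hxt⟩ := nonempty_iff_ne_empty.2 hst
  exact eq_univ_of_forall fun y => (le_total y x).imp (hs · hxs) (ht · hxt)

section

variable {Ω : Type*} [MeasurableSpace Ω] {μ : Measure Ω}

lemma measure_inter_le_mul_of_union_eq_univ [IsProbabilityMeasure μ] {s t : Set Ω}
    (ht : NullMeasurableSet t μ) (hst : s ∪ t = univ) : μ (s ∩ t) ≤ μ s * μ t := by
  have hadd := measureReal_union_add_inter₀ (s := s) ht
  rw [hst, probReal_univ] at hadd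
  have hs₁ := measureReal_le_one (μ := μ) (s := s)
  have ht₁ := measureReal_le_one (μ := μ) (s := t)
  rw [← ENNReal.toReal_le_toReal (measure_ne_top _ _) (by finiteness), ENNReal.toReal_mul]
  change μ.real (s ∩ t) ≤ μ.real s * μ.real t
  nlinarith [mul_nonneg (sub_nonneg.2 hs₁) (sub_nonneg.2 ht₁)]

lemma measure_preimage_inter_le_mul_of_isLowerSet_of_isUpperSet {α : Type*} [LinearOrder α]
    [MeasurableSpace α] [IsProbabilityMeasure μ] {X : Ω → α} (hX : AEMeasurable X μ)
    {s t : Set α} (hs : IsLowerSet s) (ht : IsUpperSet t) (htm : MeasurableSet t) :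
    μ (X ⁻¹' s ∩ X ⁻¹' t) ≤ μ (X ⁻¹' s) * μ (X ⁻¹' t) := by
  rcases hs.inter_eq_empty_or_union_eq_univ ht with h | h
  · simp [← preimage_inter, h]
  · exact measure_inter_le_mul_of_union_eq_univ (hX.nullMeasurable htm)
      (by rw [← preimage_union, h, preimage_univ])

lemma measure_preimage_inter_le_of_antitone {α : Type*} [LinearOrder α] [MeasurableSpace α]
    [IsProbabilityMeasure μ] {X Y₁ Y₂ : Ω → α} {f : α → α} (hf : Antitone f)
    (hfm : Measurable f) (h₁ : IdentDistrib X Y₁ μ μ) (h₂ : IdentDistrib (f ∘ X) Y₂ μ μ)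
    (hY : IndepFun Y₁ Y₂ μ) {s t : Set α} (hs : IsLowerSet s) (ht : IsLowerSet t)
    (hsm : MeasurableSet s) (htm : MeasurableSet t) :
    μ (X ⁻¹' s ∩ (f ∘ X) ⁻¹' t) ≤ μ (Y₁ ⁻¹' s ∩ Y₂ ⁻¹' t) := by
  have hft : IsUpperSet (f ⁻¹' t) := fun a b hab hb => ht (hf hab) hb
  calc μ (X ⁻¹' s ∩ X ⁻¹' (f ⁻¹' t))
      ≤ μ (X ⁻¹' s) * μ (X ⁻¹' (f ⁻¹' t)) :=
        measure_preimage_inter_le_mul_of_isLowerSet_of_isUpperSet h₁.aemeasurable_fst hs hft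
          (hfm htm)
    _ = μ (Y₁ ⁻¹' s) * μ (Y₂ ⁻¹' t) := by
        rw [h₁.measure_mem_eq hsm, ← h₂.measure_mem_eq htm, preimage_comp]
    _ = μ (Y₁ ⁻¹' s ∩ Y₂ ⁻¹' t) := (hY.measure_inter_preimage_eq_mul _ _ hsm htm).symm

lemma ProbabilityTheory.IndepFun.measure_setOf_mem_eq_tsum {β γ : Type*} [MeasurableSpace β]
    [Countable β] [MeasurableSingletonClass β] [MeasurableSpace γ] {S : Ω → β} {Z : Ω → γ}
    (hS : Measurable S) (hZ : Measurable Z) (hSZ : IndepFun S Z μ) {B : β → Set γ}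
    (hB : ∀ q, MeasurableSet (B q)) :
    μ {ω | Z ω ∈ B (S ω)} = ∑' q, μ (S ⁻¹' {q}) * μ (Z ⁻¹' B q) := by
  have hU : {ω | Z ω ∈ B (S ω)} = ⋃ q, S ⁻¹' {q} ∩ Z ⁻¹' B q := by
    ext ω; simp
  rw [hU, measure_iUnion]
  · exact tsum_congr fun q =>
      hSZ.measure_inter_preimage_eq_mul _ _ (measurableSet_singleton q) (hB q)
  · intro q q' hqq'
    exact Disjoint.mono inter_subset_left inter_subset_left
      ((disjoint_singleton.2 hqq').preimage S)
  · exact fun q => (hS (measurableSet_singleton q)).inter (hZ (hB q))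

lemma identDistrib_of_measure_preimage_singleton_eq {α : Type*} [MeasurableSpace α] [Countable α]
    [MeasurableSingletonClass α] {X Y : Ω → α} (hX : Measurable X) (hY : Measurable Y)
    (h : ∀ a, μ (X ⁻¹' {a}) = μ (Y ⁻¹' {a})) : IdentDistrib X Y μ μ where
  aemeasurable_fst := hX.aemeasurable
  aemeasurable_snd := hY.aemeasurable
  map_eq := Measure.ext_of_singleton fun a => by
    rw [Measure.map_apply hX (measurableSet_singleton a),
      Measure.map_apply hY (measurableSet_singleton a), h]

lemma measure_preimage_singleton_eq_of_forall_le [IsFiniteMeasure μ] {X Y : Ω → ℕ} {m : ℕ}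
    (hX : ∀ ω, X ω ≤ m) (hY : ∀ ω, Y ω ≤ m)
    (h : ∀ u ≤ m, (μ {ω | X ω = u}).toReal = (μ {ω | Y ω = u}).toReal) (u : ℕ) :
    μ (X ⁻¹' {u}) = μ (Y ⁻¹' {u}) := by
  by_cases hu : u ≤ m
  · exact (ENNReal.toReal_eq_toReal_iff' (measure_ne_top _ _) (measure_ne_top _ _)).1 (h u hu)
  · have empty : ∀ Z : Ω → ℕ, (∀ ω, Z ω ≤ m) → Z ⁻¹' {u} = ∅ := fun Z hZ =>
      eq_empty_of_forall_notMem fun ω hω => hu (hω ▸ hZ ω)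
    rw [empty X hX, empty Y hY]

end

theorem stmt6_general {Ω : Type*} [MeasureSpace Ω] [IsProbabilityMeasure (ℙ : Measure Ω)]
    (m : ℕ) (p : ℕ → ℝ)
    (k₁ k₂ : ℕ)
    (S₁ S₂ X Y Y₁ Y₂ : Ω → ℕ)
    (hmS₁ : Measurable S₁) (hmS₂ : Measurable S₂) (hmX : Measurable X)
    (hmY₁ : Measurable Y₁) (hmY₂ : Measurable Y₂)
    (hXm : ∀ ω, X ω ≤ m) (hY : ∀ ω, Y ω = m - X ω)
    (hY₁m : ∀ ω, Y₁ ω ≤ m) (hY₂m : ∀ ω, Y₂ ω ≤ m)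
    (hXd : ∀ u ≤ m, (ℙ {ω | X ω = u}).toReal = p u)
    (hY₁d : ∀ u ≤ m, (ℙ {ω | Y₁ ω = u}).toReal = p u)
    (hY₂d : ∀ v ≤ m, (ℙ {ω | Y₂ ω = v}).toReal = p (m - v))
    (hY₁Y₂ : IndepFun Y₁ Y₂ ℙ)
    (hSXY : IndepFun (fun ω => (S₁ ω, S₂ ω)) (fun ω => (X ω, Y ω)) ℙ)
    (hSY₁Y₂ : IndepFun (fun ω => (S₁ ω, S₂ ω)) (fun ω => (Y₁ ω, Y₂ ω)) ℙ) :
    ℙ {ω | S₁ ω + X ω ≤ k₁ ∧ S₂ ω + Y ω ≤ k₂}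
      ≤ ℙ {ω | S₁ ω + Y₁ ω ≤ k₁ ∧ S₂ ω + Y₂ ω ≤ k₂} := by
  obtain rfl : Y = fun ω => m - X ω := funext hY
  have hmY : Measurable fun ω => m - X ω := measurable_from_nat.comp hmX
  have hX_Y₁ : IdentDistrib X Y₁ ℙ ℙ :=
    identDistrib_of_measure_preimage_singleton_eq hmX hmY₁ <|
      measure_preimage_singleton_eq_of_forall_le hXm hY₁m fun u hu =>
        (hXd u hu).trans (hY₁d u hu).symm
  have hY_Y₂ : IdentDistrib (fun ω => m - X ω) Y₂ ℙ ℙ := by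
    refine identDistrib_of_measure_preimage_singleton_eq hmY hmY₂ <|
      measure_preimage_singleton_eq_of_forall_le (fun _ => Nat.sub_le _ _) hY₂m fun v hv => ?_
    have hset : {ω | m - X ω = v} = {ω | X ω = m - v} := by
      ext ω; have := hXm ω; change m - X ω = v ↔ X ω = m - v; omega
    rw [hset, hXd _ (Nat.sub_le _ _), hY₂d v hv]
  let B : ℕ × ℕ → Set (ℕ × ℕ) := fun q => {r | q.1 + r.1 ≤ k₁ ∧ q.2 + r.2 ≤ k₂}
  have hB : ∀ q, MeasurableSet (B q) := fun _ => .of_discrete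
  have hmS : Measurable fun ω => (S₁ ω, S₂ ω) := hmS₁.prodMk hmS₂
  refine ((hSXY.measure_setOf_mem_eq_tsum hmS (hmX.prodMk hmY) hB).trans_le
    (ENNReal.tsum_le_tsum fun q => mul_le_mul_right ?_ _)).trans_eq
    (hSY₁Y₂.measure_setOf_mem_eq_tsum hmS (hmY₁.prodMk hmY₂) hB).symm
  have lowerSet : ∀ c k : ℕ, IsLowerSet {x | c + x ≤ k} := fun c k _ _ hab hb =>
    (Nat.add_le_add_left hab c).trans hb
  exact measure_preimage_inter_le_of_antitone (f := (m - ·))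
    (fun _ _ hab => Nat.sub_le_sub_left hab m) measurable_from_nat hX_Y₁ hY_Y₂ hY₁Y₂
    (lowerSet q.1 k₁) (lowerSet q.2 k₂) .of_discrete .of_discrete

theorem stmt6 {Ω : Type*} [MeasureSpace Ω] [IsProbabilityMeasure (ℙ : Measure Ω)]
    (m : ℕ) (hm : 1 ≤ m) (p : ℕ → ℝ) (hp : ∀ u, 0 ≤ p u)
    (hsum : ∑ u ∈ Finset.range (m + 1), p u = 1)
    (k₁ k₂ : ℕ)
    (S₁ S₂ X Y Y₁ Y₂ : Ω → ℕ)
    (hmS₁ : Measurable S₁) (hmS₂ : Measurable S₂) (hmX : Measurable X)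
    (hmY₁ : Measurable Y₁) (hmY₂ : Measurable Y₂)
    (hXm : ∀ ω, X ω ≤ m) (hY : ∀ ω, Y ω = m - X ω)
    (hY₁m : ∀ ω, Y₁ ω ≤ m) (hY₂m : ∀ ω, Y₂ ω ≤ m)
    (hXd : ∀ u ≤ m, (ℙ {ω | X ω = u}).toReal = p u)
    (hY₁d : ∀ u ≤ m, (ℙ {ω | Y₁ ω = u}).toReal = p u)
    (hY₂d : ∀ v ≤ m, (ℙ {ω | Y₂ ω = v}).toReal = p (m - v))
    (hY₁Y₂ : IndepFun Y₁ Y₂ ℙ)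
    (hSXY : IndepFun (fun ω => (S₁ ω, S₂ ω)) (fun ω => (X ω, Y ω)) ℙ)
    (hSY₁Y₂ : IndepFun (fun ω => (S₁ ω, S₂ ω)) (fun ω => (Y₁ ω, Y₂ ω)) ℙ) :
    ℙ {ω | S₁ ω + X ω ≤ k₁ ∧ S₂ ω + Y ω ≤ k₂}
      ≤ ℙ {ω | S₁ ω + Y₁ ω ≤ k₁ ∧ S₂ ω + Y₂ ω ≤ k₂} :=
  stmt6_general m p k₁ k₂ S₁ S₂ X Y Y₁ Y₂ hmS₁ hmS₂ hmX hmY₁ hmY₂ hXm hY hY₁m hY₂m hXd hY₁d hY₂d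
    hY₁Y₂ hSXY hSY₁Y₂
end

section
/- Consider a generalized round-robin tournament on n ≥ 2 players where for each unordered pair {i,j} the nonnegative-integer-valued scores satisfy X_{ij} + X_{ji} = m, the (n choose 2) pairs (X_{ij}, X_{ji}) with i < j are mutually independent, and P(X_{ij} = u) = p_u = P(X_{ji} = m - u) for all u, where p_0 + ... + p_m = 1. Let s_i = Σ_{j ≠ i} X_{ij}. Then for any nonnegative integers k_1,...,k_n, P(s_1 ≤ k_1, ..., s_n ≤ k_n) ≤ P(s_1 ≤ k_1) · ... · P(s_n ≤ k_n). -/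
open MeasureTheory ProbabilityTheory Finset



lemma harris_aux {α : Type*} [Fintype α] [DistribLattice α]
    (μ f g : α → ℝ) (hμ0 : ∀ a, 0 ≤ μ a)
    (hμ : ∀ a b, μ a * μ b ≤ μ (a ⊓ b) * μ (a ⊔ b))
    (hf0 : ∀ a, 0 ≤ f a) (hf1 : ∀ a, f a ≤ 1) (hf : Antitone f)
    (hg0 : ∀ a, 0 ≤ g a) (hg : Monotone g)
    (hμ1 : ∑ a, μ a = 1) :
    ∑ a, μ a * (f a * g a) ≤ (∑ a, μ a * f a) * (∑ a, μ a * g a) := by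
  have h := fkg (μ := μ) (f := fun a => 1 - f a) (g := g)
    (hμ₀ := fun a => hμ0 a) (hf₀ := fun a => by simpa using hf1 a)
    (hg₀ := fun a => hg0 a) (hf := fun a b hab => by have := hf hab; dsimp; linarith)
    (hg := hg) (hμ := hμ)
  have e1 : ∑ a, μ a * ((fun a => 1 - f a) a) = 1 - ∑ a, μ a * f a := by
    simp only [mul_sub, mul_one]
    rw [Finset.sum_sub_distrib, hμ1]
  have e2 : ∑ a, μ a * ((fun a => 1 - f a) a * g a)
      = ∑ a, μ a * g a - ∑ a, μ a * (f a * g a) := by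
    rw [← Finset.sum_sub_distrib]; congr 1; ext a; ring
  rw [e1, e2, hμ1] at h
  nlinarith [h]

variable {n m : ℕ}

abbrev EE (n : ℕ) := {q : Fin n × Fin n // q.1 < q.2}
abbrev DSub (n : ℕ) (j : Fin n) := {e : EE n // e.val.1 = j ∨ e.val.2 = j}
abbrev RSub (n : ℕ) (j : Fin n) := {e : EE n // ¬(e.val.1 = j ∨ e.val.2 = j)}
abbrev CD (n m : ℕ) (j : Fin n) := DSub n j → Fin (m+1)
abbrev CR (n m : ℕ) (j : Fin n) := RSub n j → Fin (m+1)

def vV (m : ℕ) (i j : Fin n) (y : EE n → Fin (m+1)) : ℕ :=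
  if h : i < j then (y ⟨(i,j), h⟩ : ℕ) else
    if h' : j < i then m - (y ⟨(j,i), h'⟩ : ℕ) else 0

def sig (m : ℕ) (i : Fin n) (y : EE n → Fin (m+1)) : ℕ :=
  ∑ j ∈ univ.erase i, vV m i j y

def Wt (m : ℕ) (p : ℕ → ℝ) (y : EE n → Fin (m+1)) : ℝ := ∏ e, p (y e)

def Ai (m : ℕ) (k : Fin n → ℕ) (i : Fin n) (y : EE n → Fin (m+1)) : ℝ :=
  if sig m i y ≤ k i then 1 else 0

def Gl (j : Fin n) (a : CD n m j) (b : CR n m j) : EE n → Fin (m+1) :=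
  fun e => if h : e.val.1 = j ∨ e.val.2 = j then a ⟨e, h⟩ else b ⟨e, h⟩

lemma Gl_mem {j : Fin n} {e : EE n} (h : e.val.1 = j ∨ e.val.2 = j) (a : CD n m j)
    (b : CR n m j) : Gl j a b e = a ⟨e, h⟩ := dif_pos h

lemma Gl_not_mem {j : Fin n} {e : EE n} (h : ¬(e.val.1 = j ∨ e.val.2 = j)) (a : CD n m j)
    (b : CR n m j) : Gl j a b e = b ⟨e, h⟩ := dif_neg h

def rho (j : Fin n) (z : CD n m j) : CD n m j :=
  fun d => if d.val.val.1 = j then z d else (z d).rev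

lemma rho_fst {j : Fin n} {d : DSub n j} (h : d.val.val.1 = j) (z : CD n m j) :
    rho j z d = z d := if_pos h

lemma rho_snd {j : Fin n} {d : DSub n j} (h : ¬ d.val.val.1 = j) (z : CD n m j) :
    rho j z d = (z d).rev := if_neg h

lemma rho_invol (j : Fin n) : Function.Involutive (rho (n := n) (m := m) j) := by
  intro z; funext d; unfold rho
  by_cases h : d.val.val.1 = j <;> simp [h, Fin.rev_rev]

lemma val_rev (u : Fin (m+1)) : (u.rev : ℕ) = m - u := by
  rw [Fin.val_rev]; omega

lemma vV_mono {j : Fin n} {z z' : CD n m j} (hz : z ≤ z') (b : CR n m j)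
    (j' : Fin n) (hj' : j' ≠ j) :
    vV m j j' (Gl j (rho j z) b) ≤ vV m j j' (Gl j (rho j z') b) := by
  rcases lt_trichotomy j j' with h | h | h
  · have he : ((⟨(j, j'), h⟩ : EE n)).val.1 = j ∨ ((⟨(j, j'), h⟩ : EE n)).val.2 = j := Or.inl rfl
    rw [vV, vV, dif_pos h, dif_pos h, Gl_mem he, Gl_mem he,
      rho_fst (d := ⟨_, he⟩) rfl, rho_fst (d := ⟨_, he⟩) rfl]
    exact hz _
  · exact absurd h.symm hj'
  · have he : ((⟨(j', j), h⟩ : EE n)).val.1 = j ∨ ((⟨(j', j), h⟩ : EE n)).val.2 = j := Or.inr rfl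
    have hne : ¬ ((⟨(j', j), h⟩ : EE n)).val.1 = j := fun hc => absurd hc hj'
    rw [vV, vV, dif_neg (not_lt_of_gt h), dif_neg (not_lt_of_gt h), dif_pos h, dif_pos h,
      Gl_mem he, Gl_mem he, rho_snd (d := ⟨_, he⟩) hne, rho_snd (d := ⟨_, he⟩) hne,
      val_rev, val_rev]
    have h1 : (z ⟨_, he⟩ : ℕ) ≤ m := Nat.lt_succ_iff.1 (z _).isLt
    have h2 : (z' ⟨_, he⟩ : ℕ) ≤ m := Nat.lt_succ_iff.1 (z' _).isLt
    have h3 : (z ⟨_, he⟩ : ℕ) ≤ (z' ⟨_, he⟩ : ℕ) := hz _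
    omega

lemma vV_anti {j : Fin n} {z z' : CD n m j} (hz : z ≤ z') (b : CR n m j)
    (i : Fin n) (hi : i ≠ j) :
    vV m i j (Gl j (rho j z') b) ≤ vV m i j (Gl j (rho j z) b) := by
  rcases lt_trichotomy i j with h | h | h
  · have he : ((⟨(i, j), h⟩ : EE n)).val.1 = j ∨ ((⟨(i, j), h⟩ : EE n)).val.2 = j := Or.inr rfl
    have hne : ¬ ((⟨(i, j), h⟩ : EE n)).val.1 = j := fun hc => absurd hc hi
    rw [vV, vV, dif_pos h, dif_pos h, Gl_mem he, Gl_mem he,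
      rho_snd (d := ⟨_, he⟩) hne, rho_snd (d := ⟨_, he⟩) hne, val_rev, val_rev]
    have h3 : (z ⟨_, he⟩ : ℕ) ≤ (z' ⟨_, he⟩ : ℕ) := hz _
    omega
  · exact absurd h hi
  · have he : ((⟨(j, i), h⟩ : EE n)).val.1 = j ∨ ((⟨(j, i), h⟩ : EE n)).val.2 = j := Or.inl rfl
    rw [vV, vV, dif_neg (not_lt_of_gt h), dif_neg (not_lt_of_gt h), dif_pos h, dif_pos h,
      Gl_mem he, Gl_mem he, rho_fst (d := ⟨_, he⟩) rfl, rho_fst (d := ⟨_, he⟩) rfl]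
    have h3 : (z ⟨_, he⟩ : ℕ) ≤ (z' ⟨_, he⟩ : ℕ) := hz _
    omega

lemma vV_const {j : Fin n} (i j' : Fin n) (hi : i ≠ j) (hj' : j' ≠ j)
    (a a' : CD n m j) (b : CR n m j) :
    vV m i j' (Gl j a b) = vV m i j' (Gl j a' b) := by
  rcases lt_trichotomy i j' with h | h | h
  · have he : ¬(((⟨(i, j'), h⟩ : EE n)).val.1 = j ∨ ((⟨(i, j'), h⟩ : EE n)).val.2 = j) := by
      rintro (hc | hc) <;> [exact hi hc; exact hj' hc]
    rw [vV, vV, dif_pos h, dif_pos h, Gl_not_mem he, Gl_not_mem he]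
  · simp [vV, h]
  · have he : ¬(((⟨(j', i), h⟩ : EE n)).val.1 = j ∨ ((⟨(j', i), h⟩ : EE n)).val.2 = j) := by
      rintro (hc | hc) <;> [exact hj' hc; exact hi hc]
    rw [vV, vV, dif_neg (not_lt_of_gt h), dif_neg (not_lt_of_gt h), dif_pos h, dif_pos h,
      Gl_not_mem he, Gl_not_mem he]

lemma vV_constb {j : Fin n} (j' : Fin n) (hj' : j' ≠ j)
    (a : CD n m j) (b b' : CR n m j) :
    vV m j j' (Gl j a b) = vV m j j' (Gl j a b') := by
  rcases lt_trichotomy j j' with h | h | h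
  · have he : ((⟨(j, j'), h⟩ : EE n)).val.1 = j ∨ ((⟨(j, j'), h⟩ : EE n)).val.2 = j := Or.inl rfl
    rw [vV, vV, dif_pos h, dif_pos h, Gl_mem he, Gl_mem he]
  · exact absurd h.symm hj'
  · have he : ((⟨(j', j), h⟩ : EE n)).val.1 = j ∨ ((⟨(j', j), h⟩ : EE n)).val.2 = j := Or.inr rfl
    rw [vV, vV, dif_neg (not_lt_of_gt h), dif_neg (not_lt_of_gt h), dif_pos h, dif_pos h,
      Gl_mem he, Gl_mem he]

lemma sig_mono {j : Fin n} {z z' : CD n m j} (hz : z ≤ z') (b : CR n m j) :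
    sig m j (Gl j (rho j z) b) ≤ sig m j (Gl j (rho j z') b) :=
  Finset.sum_le_sum fun j' hj' => vV_mono hz b j' (Finset.ne_of_mem_erase hj')

lemma sig_anti {j : Fin n} {z z' : CD n m j} (hz : z ≤ z') (b : CR n m j)
    (i : Fin n) (hi : i ≠ j) :
    sig m i (Gl j (rho j z') b) ≤ sig m i (Gl j (rho j z) b) :=
  Finset.sum_le_sum fun j' _ => by
    by_cases hj'j : j' = j
    · subst hj'j; exact vV_anti hz b i hi
    · exact le_of_eq (vV_const i j' hi hj'j _ _ b)

lemma sig_j_constb {j : Fin n} (a : CD n m j) (b b' : CR n m j) :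
    sig m j (Gl j a b) = sig m j (Gl j a b') :=
  Finset.sum_congr rfl fun j' hj' => vV_constb j' (Finset.ne_of_mem_erase hj') a b b'

def glEquiv (j : Fin n) : (CD n m j × CR n m j) ≃ (EE n → Fin (m+1)) where
  toFun := fun ab => Gl j ab.1 ab.2
  invFun := fun y => (fun d => y d.val, fun r => y r.val)
  left_inv := by
    rintro ⟨a, b⟩
    refine Prod.ext (funext fun d => ?_) (funext fun r => ?_)
    · simp only [Gl_mem d.prop]
    · simp only [Gl_not_mem r.prop]
  right_inv := by
    intro y; funext e; unfold Gl
    by_cases h : e.val.1 = j ∨ e.val.2 = j <;> simp [h]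

lemma sum_split (j : Fin n) (F : (EE n → Fin (m+1)) → ℝ) :
    ∑ y, F y = ∑ a : CD n m j, ∑ b : CR n m j, F (Gl j a b) := by
  rw [← Equiv.sum_comp (glEquiv j) F, Fintype.sum_prod_type]
  rfl

lemma W_split (j : Fin n) (p : ℕ → ℝ) (a : CD n m j) (b : CR n m j) :
    Wt m p (Gl j a b) = (∏ d : DSub n j, p (a d)) * (∏ r : RSub n j, p (b r)) := by
  rw [Wt, ← Equiv.prod_comp (Equiv.sumCompl (fun e : EE n => e.val.1 = j ∨ e.val.2 = j))
    (fun e => p (Gl j a b e)), Fintype.prod_sum_type]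
  congr 1
  · exact Finset.prod_congr rfl fun d _ => by
      simp only [Equiv.sumCompl_apply_inl, Gl_mem d.prop]
  · exact Finset.prod_congr rfl fun r _ => by
      simp only [Equiv.sumCompl_apply_inr, Gl_not_mem r.prop]

lemma sum_prob_pi {ι : Type*} [Fintype ι] [DecidableEq ι] (w : ι → Fin (m+1) → ℝ)
    (hw : ∀ i, ∑ u : Fin (m+1), w i u = 1) :
    ∑ c : ι → Fin (m+1), ∏ i, w i (c i) = 1 := by
  rw [← Fintype.piFinset_univ, ← Finset.prod_univ_sum]
  simp [hw]

lemma sum_rev (f : Fin (m+1) → ℝ) : ∑ u : Fin (m+1), f u.rev = ∑ u : Fin (m+1), f u :=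
  Fintype.sum_equiv (Fin.revPerm) _ _ (fun u => rfl)

def wgt (p : ℕ → ℝ) (j : Fin n) (d : DSub n j) (u : Fin (m+1)) : ℝ :=
  if d.val.val.1 = j then p (u : ℕ) else p ((u.rev : Fin (m+1)) : ℕ)

lemma rho_wgt (p : ℕ → ℝ) (j : Fin n) (z : CD n m j) (d : DSub n j) :
    p ((rho j z d : Fin (m+1)) : ℕ) = wgt p j d (z d) := by
  unfold wgt
  by_cases h : d.val.val.1 = j
  · rw [rho_fst h, if_pos h]
  · rw [rho_snd h, if_neg h]

lemma mu_sum_one (j : Fin n) (p : ℕ → ℝ)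
    (hone : ∑ u : Fin (m+1), p (u : ℕ) = 1) :
    ∑ z : CD n m j, ∏ d : DSub n j, p ((rho j z d : Fin (m+1)) : ℕ) = 1 := by
  have e1 : ∀ z : CD n m j, ∏ d : DSub n j, p ((rho j z d : Fin (m+1)) : ℕ)
      = ∏ d : DSub n j, wgt p j d (z d) :=
    fun z => Finset.prod_congr rfl fun d _ => rho_wgt p j z d
  rw [Finset.sum_congr rfl fun z _ => e1 z]
  refine sum_prob_pi _ fun d => ?_
  unfold wgt
  by_cases h : d.val.val.1 = j
  · simp only [if_pos h]; exact hone
  · simp only [if_neg h]; rw [sum_rev (fun u => p (u : ℕ))]; exact hone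

lemma mu_logmod (j : Fin n) (p : ℕ → ℝ) (z z' : CD n m j) :
    (∏ d : DSub n j, p ((rho j z d : Fin (m+1)) : ℕ)) * (∏ d : DSub n j, p ((rho j z' d : Fin (m+1)) : ℕ))
    = (∏ d : DSub n j, p ((rho j (z ⊓ z') d : Fin (m+1)) : ℕ))
      * (∏ d : DSub n j, p ((rho j (z ⊔ z') d : Fin (m+1)) : ℕ)) := by
  rw [← Finset.prod_mul_distrib, ← Finset.prod_mul_distrib]
  refine Finset.prod_congr rfl fun d _ => ?_
  rw [rho_wgt p j z d, rho_wgt p j z' d, rho_wgt p j (z ⊓ z') d, rho_wgt p j (z ⊔ z') d]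
  have hinf : (z ⊓ z') d = z d ⊓ z' d := rfl
  have hsup : (z ⊔ z') d = z d ⊔ z' d := rfl
  rw [hinf, hsup]
  rcases le_total (z d) (z' d) with h | h
  · rw [inf_eq_left.2 h, sup_eq_right.2 h]
  · rw [inf_eq_right.2 h, sup_eq_left.2 h, mul_comm]

lemma ind_le {P Q : Prop} [Decidable P] [Decidable Q] (h : Q → P) :
    (if Q then (1:ℝ) else 0) ≤ (if P then 1 else 0) := by
  split_ifs with h1 h2 <;> simp_all

lemma Ai_nonneg (k : Fin n → ℕ) (i : Fin n) (y : EE n → Fin (m+1)) : 0 ≤ Ai m k i y := by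
  unfold Ai; split_ifs <;> norm_num

lemma Ai_le_one (k : Fin n → ℕ) (i : Fin n) (y : EE n → Fin (m+1)) : Ai m k i y ≤ 1 := by
  unfold Ai; split_ifs <;> norm_num

lemma key_s7 (p : ℕ → ℝ) (hp : ∀ u, 0 ≤ p u)
    (hone : ∑ u : Fin (m+1), p (u : ℕ) = 1) (k : Fin n → ℕ)
    (j : Fin n) (T : Finset (Fin n)) (hj : j ∉ T) :
    ∑ y, (Ai m k j y * ∏ i ∈ T, Ai m k i y) * Wt m p y
      ≤ (∑ y, Ai m k j y * Wt m p y) * (∑ y, (∏ i ∈ T, Ai m k i y) * Wt m p y) := by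
  classical
  set μ : CD n m j → ℝ := fun z => ∏ d : DSub n j, p ((rho j z d : Fin (m+1)) : ℕ) with hμdef
  set WR : CR n m j → ℝ := fun b => ∏ r : RSub n j, p ((b r : Fin (m+1)) : ℕ) with hWRdef
  have hμ0 : ∀ z, 0 ≤ μ z := fun z => Finset.prod_nonneg fun d _ => hp _
  have hWR0 : ∀ b, 0 ≤ WR b := fun b => Finset.prod_nonneg fun r _ => hp _
  have hμ1 : ∑ z, μ z = 1 := mu_sum_one j p hone
  have hWR1 : ∑ b, WR b = 1 := sum_prob_pi (fun _ u => p (u : ℕ)) fun _ => hone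
  have hμlog : ∀ z z', μ z * μ z' ≤ μ (z ⊓ z') * μ (z ⊔ z') :=
    fun z z' => le_of_eq (mu_logmod j p z z')
  have hWsplit : ∀ z b, Wt m p (Gl j (rho j z) b) = μ z * WR b := fun z b => W_split j p _ b
  have hsplit : ∀ F : (EE n → Fin (m+1)) → ℝ,
      ∑ y, F y = ∑ b, ∑ z, F (Gl j (rho j z) b) := by
    intro F
    rw [sum_split j F, Finset.sum_comm]
    refine Finset.sum_congr rfl fun b _ => ?_
    exact (Equiv.sum_comp (Function.Involutive.toPerm _ (rho_invol j))
      (fun a => F (Gl j a b))).symm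
  set fb : CR n m j → CD n m j → ℝ := fun b z => Ai m k j (Gl j (rho j z) b) with hfbdef
  set gb : CR n m j → CD n m j → ℝ :=
    fun b z => ∏ i ∈ T, Ai m k i (Gl j (rho j z) b) with hgbdef
  have hfanti : ∀ b, Antitone (fb b) := by
    intro b z z' hz
    exact ind_le fun h => le_trans (sig_mono hz b) h
  have hgmono : ∀ b, Monotone (gb b) := by
    intro b z z' hz
    refine Finset.prod_le_prod (fun i _ => Ai_nonneg k i _) fun i hi => ?_
    have hij : i ≠ j := fun h => hj (h ▸ hi)
    exact ind_le fun h => le_trans (sig_anti hz b i hij) h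
  have hf0 : ∀ b z, 0 ≤ fb b z := fun b z => Ai_nonneg k j _
  have hf1 : ∀ b z, fb b z ≤ 1 := fun b z => Ai_le_one k j _
  have hg0 : ∀ b z, 0 ≤ gb b z := fun b z => Finset.prod_nonneg fun i _ => Ai_nonneg k i _
  have harris : ∀ b, ∑ z, μ z * (fb b z * gb b z)
      ≤ (∑ z, μ z * fb b z) * (∑ z, μ z * gb b z) :=
    fun b => harris_aux μ (fb b) (gb b) hμ0 hμlog (hf0 b) (hf1 b) (hfanti b) (hg0 b)
      (hgmono b) hμ1
  -- Sf independent of b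
  have hfconst : ∀ b b' z, fb b z = fb b' z := by
    intro b b' z
    simp only [hfbdef, Ai]
    rw [sig_j_constb (rho j z) b b']
  set b₀ : CR n m j := fun _ => 0 with hb₀
  set Sf : ℝ := ∑ z, μ z * fb b₀ z with hSfdef
  have hSf : ∀ b, ∑ z, μ z * fb b z = Sf :=
    fun b => Finset.sum_congr rfl fun z _ => by rw [hfconst b b₀ z]
  have hSf0 : 0 ≤ Sf := Finset.sum_nonneg fun z _ => mul_nonneg (hμ0 z) (hf0 b₀ z)
  -- rewrite all three sums
  have eL : ∑ y, (Ai m k j y * ∏ i ∈ T, Ai m k i y) * Wt m p y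
      = ∑ b, WR b * ∑ z, μ z * (fb b z * gb b z) := by
    rw [hsplit]
    refine Finset.sum_congr rfl fun b _ => ?_
    rw [Finset.mul_sum]
    refine Finset.sum_congr rfl fun z _ => ?_
    rw [hWsplit]; ring
  have eR1 : ∑ y, Ai m k j y * Wt m p y = Sf := by
    rw [hsplit]
    have : ∀ b, ∑ z, Ai m k j (Gl j (rho j z) b) * Wt m p (Gl j (rho j z) b)
        = WR b * Sf := by
      intro b
      rw [← hSf b, Finset.mul_sum]
      refine Finset.sum_congr rfl fun z _ => ?_
      rw [hWsplit]; ring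
    rw [Finset.sum_congr rfl fun b _ => this b, ← Finset.sum_mul, hWR1, one_mul]
  have eR2 : ∑ y, (∏ i ∈ T, Ai m k i y) * Wt m p y = ∑ b, WR b * ∑ z, μ z * gb b z := by
    rw [hsplit]
    refine Finset.sum_congr rfl fun b _ => ?_
    rw [Finset.mul_sum]
    refine Finset.sum_congr rfl fun z _ => ?_
    rw [hWsplit]; ring
  rw [eL, eR1, eR2, Finset.mul_sum]
  refine Finset.sum_le_sum fun b _ => ?_
  calc WR b * ∑ z, μ z * (fb b z * gb b z)
      ≤ WR b * ((∑ z, μ z * fb b z) * (∑ z, μ z * gb b z)) :=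
        mul_le_mul_of_nonneg_left (harris b) (hWR0 b)
    _ = Sf * (WR b * ∑ z, μ z * gb b z) := by rw [hSf b]; ring

lemma comb (p : ℕ → ℝ) (hp : ∀ u, 0 ≤ p u)
    (hone : ∑ u : Fin (m+1), p (u : ℕ) = 1) (k : Fin n → ℕ) (T : Finset (Fin n)) :
    ∑ y, (∏ i ∈ T, Ai m k i y) * Wt m p y ≤ ∏ i ∈ T, ∑ y, Ai m k i y * Wt m p y := by
  classical
  induction T using Finset.induction_on with
  | empty =>
    simp only [Finset.prod_empty, one_mul]
    rw [show ∑ y : EE n → Fin (m+1), Wt m p y = 1 from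
      sum_prob_pi (fun _ u => p (u : ℕ)) fun _ => hone]
  | insert j T hj ih =>
    have h1 : ∑ y, (∏ i ∈ insert j T, Ai m k i y) * Wt m p y
        = ∑ y, (Ai m k j y * ∏ i ∈ T, Ai m k i y) * Wt m p y := by
      refine Finset.sum_congr rfl fun y _ => ?_
      rw [Finset.prod_insert hj]
    have h2 : 0 ≤ ∑ y, Ai m k j y * Wt m p y :=
      Finset.sum_nonneg fun y _ => mul_nonneg (Ai_nonneg k j y)
        (Finset.prod_nonneg fun e _ => hp _)
    rw [h1, Finset.prod_insert hj]
    calc ∑ y, (Ai m k j y * ∏ i ∈ T, Ai m k i y) * Wt m p y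
        ≤ (∑ y, Ai m k j y * Wt m p y) * (∑ y, (∏ i ∈ T, Ai m k i y) * Wt m p y) :=
          key_s7 p hp hone k j T hj
      _ ≤ (∑ y, Ai m k j y * Wt m p y) * ∏ i ∈ T, ∑ y, Ai m k i y * Wt m p y :=
          mul_le_mul_of_nonneg_left ih h2

theorem stmt7 {Ω : Type*} [MeasureSpace Ω] [IsProbabilityMeasure (ℙ : Measure Ω)]
    (n m : ℕ) (hn : 2 ≤ n) (hm : 1 ≤ m)
    (p : ℕ → ℝ) (hp : ∀ u, 0 ≤ p u)
    (hsum : ∑ u ∈ Finset.range (m + 1), p u = 1)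
    (X : Fin n → Fin n → Ω → ℕ)
    (hmeas : ∀ i j, Measurable (X i j))
    (hcomp : ∀ i j, i ≠ j → ∀ ω, X i j ω + X j i ω = m)
    (hdist : ∀ i j, i ≠ j → ∀ u ≤ m, (ℙ {ω | X i j ω = u}).toReal = p u)
    (hindep : iIndepFun
        (fun q : {q : Fin n × Fin n // q.1 < q.2} =>
          fun ω => (X q.1.1 q.1.2 ω, X q.1.2 q.1.1 ω)) ℙ)
    (s : Fin n → Ω → ℕ) (hs : ∀ i ω, s i ω = ∑ j ∈ Finset.univ.erase i, X i j ω)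
    (k : Fin n → ℕ) :
    (ℙ {ω | ∀ i, s i ω ≤ k i}).toReal ≤ ∏ i, (ℙ {ω | s i ω ≤ k i}).toReal := by
  classical
  have hone : ∑ u : Fin (m+1), p (u : ℕ) = 1 := by
    rw [Fin.sum_univ_eq_sum_range (fun u => p u) (m+1)]; exact hsum
  have hXle : ∀ (i j : Fin n), i ≠ j → ∀ ω, X i j ω ≤ m := fun i j h ω => by
    have := hcomp i j h ω; omega
  set Y : Ω → EE n → Fin (m+1) := fun ω e =>
    ⟨X e.val.1 e.val.2 ω, Nat.lt_succ_of_le (hXle _ _ (ne_of_lt e.prop) ω)⟩ with hYdef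
  have hXv : ∀ ω (i j : Fin n), i ≠ j → X i j ω = vV m i j (Y ω) := by
    intro ω i j hij
    rcases lt_trichotomy i j with h | h | h
    · rw [vV, dif_pos h]
    · exact absurd h hij
    · rw [vV, dif_neg (not_lt_of_gt h), dif_pos h]
      show X i j ω = m - X j i ω
      have := hcomp j i (ne_of_lt h) ω; omega
  have hsY : ∀ ω i, s i ω = sig m i (Y ω) := by
    intro ω i
    rw [hs, sig]
    exact Finset.sum_congr rfl fun j hj =>
      hXv ω i j (Ne.symm (Finset.mem_erase.1 hj).1)
  have hatomMeas : ∀ y : EE n → Fin (m+1), MeasurableSet {ω | Y ω = y} := by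
    intro y
    have : {ω | Y ω = y} = ⋂ e : EE n, {ω | X e.val.1 e.val.2 ω = (y e : ℕ)} := by
      ext ω
      simp only [Set.mem_setOf_eq, Set.mem_iInter, funext_iff, Fin.ext_iff]
      exact Iff.rfl
    rw [this]
    exact MeasurableSet.iInter fun e => hmeas _ _ (measurableSet_singleton _)
  have hatom : ∀ y : EE n → Fin (m+1),
      ℙ {ω | Y ω = y} = ∏ e : EE n, ℙ {ω | X e.val.1 e.val.2 ω = (y e : ℕ)} := by
    intro y
    have hset : {ω | Y ω = y} = ⋂ e : EE n, {ω | X e.val.1 e.val.2 ω = (y e : ℕ)} := by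
      ext ω
      simp only [Set.mem_setOf_eq, Set.mem_iInter, funext_iff, Fin.ext_iff]
      exact Iff.rfl
    rw [hset]
    exact hindep.meas_iInter fun e =>
      ⟨Prod.fst ⁻¹' {((y e : ℕ))}, measurable_fst (measurableSet_singleton _), rfl⟩
  have hatomW : ∀ y : EE n → Fin (m+1), (ℙ {ω | Y ω = y}).toReal = Wt m p y := by
    intro y
    rw [hatom, ENNReal.toReal_prod, Wt]
    exact Finset.prod_congr rfl fun e _ =>
      hdist e.val.1 e.val.2 (ne_of_lt e.prop) _ (Nat.lt_succ_iff.1 (y e).isLt)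
  have hpart : ∀ (Q : (EE n → Fin (m+1)) → Prop) (_ : DecidablePred Q),
      (ℙ {ω | Q (Y ω)}).toReal = ∑ y ∈ Finset.univ.filter Q, Wt m p y := by
    intro Q _
    have hset : {ω | Q (Y ω)} = ⋃ y ∈ Finset.univ.filter Q, {ω | Y ω = y} := by
      ext ω
      simp only [Set.mem_setOf_eq, Set.mem_iUnion, Finset.mem_filter, Finset.mem_univ, true_and]
      exact ⟨fun h => ⟨Y ω, h, rfl⟩, fun ⟨y, hQ, hy⟩ => hy ▸ hQ⟩
    rw [hset, measure_biUnion_finset ?_ (fun y _ => hatomMeas y)]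
    · rw [ENNReal.toReal_sum (fun y _ => measure_ne_top _ _)]
      exact Finset.sum_congr rfl fun y _ => hatomW y
    · intro y _ y' _ hne
      refine Set.disjoint_left.2 fun ω h1 h2 => hne ?_
      exact (h1 : Y ω = y).symm.trans h2
  -- LHS
  have hL : (ℙ {ω | ∀ i, s i ω ≤ k i}).toReal
      = ∑ y, (∏ i, Ai m k i y) * Wt m p y := by
    have hset : {ω | ∀ i, s i ω ≤ k i} = {ω | (fun y => ∀ i, sig m i y ≤ k i) (Y ω)} := by
      ext ω; simp only [Set.mem_setOf_eq]
      exact forall_congr' fun i => by rw [hsY ω i]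
    rw [hset]
    refine (hpart (fun y => ∀ i, sig m i y ≤ k i) inferInstance).trans ?_
    rw [Finset.sum_filter]
    refine Finset.sum_congr rfl fun y _ => ?_
    have : (∏ i, Ai m k i y) = if (∀ i, sig m i y ≤ k i) then (1:ℝ) else 0 := by
      unfold Ai
      rw [Finset.prod_boole]
      by_cases h : ∀ i, sig m i y ≤ k i
      · rw [if_pos (fun i _ => h i), if_pos h]
      · rw [if_neg (fun hc => h fun i => hc i (Finset.mem_univ i)), if_neg h]
    rw [this]
    split_ifs <;> simp
  have hR : ∀ i, (ℙ {ω | s i ω ≤ k i}).toReal = ∑ y, Ai m k i y * Wt m p y := by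
    intro i
    have hset : {ω | s i ω ≤ k i} = {ω | (fun y => sig m i y ≤ k i) (Y ω)} := by
      ext ω; simp only [Set.mem_setOf_eq]; rw [hsY ω i]
    rw [hset]
    refine (hpart (fun y => sig m i y ≤ k i) inferInstance).trans ?_
    rw [Finset.sum_filter]
    refine Finset.sum_congr rfl fun y _ => ?_
    rw [Ai, ite_mul, one_mul, zero_mul]
  rw [hL]
  calc ∑ y, (∏ i, Ai m k i y) * Wt m p y
      ≤ ∏ i, ∑ y, Ai m k i y * Wt m p y := comb p hp hone k Finset.univ
    _ = ∏ i, (ℙ {ω | s i ω ≤ k i}).toReal := Finset.prod_congr rfl fun i _ => (hR i).symm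
end

section
/- In the classical round-robin tournament where X_{ij} ∈ {0,1}, X_{ij} + X_{ji} = 1, pairs independent across distinct unordered pairs, and P(X_{ij} = 1) = p_{ij} arbitrary, the joint distribution function of the scores s_1,...,s_n satisfies P(s_1 < k_1, ..., s_n < k_n) ≤ P(s_1 < k_1) · ... · P(s_n < k_n) for any real numbers k_1,...,k_n (Huber's inequality). -/
open MeasureTheory ProbabilityTheory Finset

private lemma cheb (a b F0 F1 G0 G1 : ℝ) (ha : 0 ≤ a) (hb : 0 ≤ b) (hab : a + b = 1)
    (h : (F1 - F0) * (G1 - G0) ≤ 0) :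
    a * (F0 * G0) + b * (F1 * G1) ≤ (a * F0 + b * F1) * (a * G0 + b * G1) := by
  have hb' : b = 1 - a := by linarith
  subst hb'
  nlinarith [mul_nonpos_of_nonneg_of_nonpos (mul_nonneg ha hb) h]

private lemma split_sum {J : Type*} [Fintype J] [DecidableEq J] (j : J) (F : (J → Bool) → ℝ) :
    ∑ c : J → Bool, F c
      = ∑ c ∈ Finset.univ.filter (fun c : J → Bool => c j = false),
          (F c + F (Function.update c j true)) := by
  rw [Finset.sum_add_distrib]
  rw [← Finset.sum_filter_add_sum_filter_not Finset.univ (fun c : J → Bool => c j = false) F]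
  congr 1
  refine Finset.sum_nbij' (fun c => Function.update c j false) (fun c => Function.update c j true)
    ?_ ?_ ?_ ?_ ?_
  · intro c hc; simp
  · intro c hc; simp
  · intro c hc
    simp only [Finset.mem_filter, Finset.mem_univ, true_and, Bool.not_eq_false] at hc
    funext j'; by_cases h : j' = j
    · subst h; simp [hc]
    · simp [Function.update_of_ne h]
  · intro c hc
    simp only [Finset.mem_filter, Finset.mem_univ, true_and] at hc
    funext j'; by_cases h : j' = j
    · subst h; simp [hc]
    · simp [Function.update_of_ne h]
  · intro c hc
    simp only [Finset.mem_filter, Finset.mem_univ, true_and, Bool.not_eq_false] at hc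
    rw [Function.update_idem]
    congr 1
    funext j'; by_cases h : j' = j
    · subst h; simp [hc]
    · simp [Function.update_of_ne h]

private lemma prod_update {J : Type*} [Fintype J] [DecidableEq J] (u : J → Bool → ℝ)
    (c : J → Bool) (j : J) (v : Bool) :
    (∏ j' : J, u j' (Function.update c j v j'))
      = u j v * ∏ j' ∈ Finset.univ.erase j, u j' (c j') := by
  rw [← Finset.mul_prod_erase Finset.univ _ (Finset.mem_univ j)]
  rw [Function.update_self]
  congr 1
  refine Finset.prod_congr rfl fun j' hj' => ?_
  rw [Function.update_of_ne (Finset.ne_of_mem_erase hj')]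

private lemma id1 {J : Type*} [Fintype J] [DecidableEq J] (u : J → Bool → ℝ)
    (hn : ∀ j, u j false + u j true = 1) (j : J) (F : (J → Bool) → ℝ) :
    ∑ c : J → Bool, (∏ j', u j' (c j')) * F c
      = ∑ c : J → Bool, (∏ j', u j' (c j'))
          * (u j false * F (Function.update c j false) + u j true * F (Function.update c j true)) := by
  rw [split_sum j (fun c => (∏ j', u j' (c j')) * F c),
    split_sum j (fun c => (∏ j', u j' (c j'))
      * (u j false * F (Function.update c j false) + u j true * F (Function.update c j true)))]
  refine Finset.sum_congr rfl fun c hc => ?_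
  simp only [Finset.mem_filter, Finset.mem_univ, true_and] at hc
  have hcup : Function.update c j false = c := by
    funext j'; by_cases h : j' = j
    · subst h; simp [hc]
    · simp [Function.update_of_ne h]
  have h1 : (∏ j', u j' (c j')) = u j false * ∏ j' ∈ Finset.univ.erase j, u j' (c j') := by
    conv_lhs => rw [← hcup]
    rw [prod_update]
  have h2 : (∏ j', u j' (Function.update c j true j'))
      = u j true * ∏ j' ∈ Finset.univ.erase j, u j' (c j') := prod_update u c j true
  rw [Function.update_idem, Function.update_idem, hcup, h1, h2]
  linear_combination (-(∏ j' ∈ Finset.univ.erase j, u j' (c j')) *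
    (u j false * F c + u j true * F (Function.update c j true))) * hn j

private lemma sumU {J : Type*} [Fintype J] [DecidableEq J] (u : J → Bool → ℝ)
    (hn : ∀ j, u j false + u j true = 1) :
    ∑ c : J → Bool, (∏ j, u j (c j)) = 1 := by
  have := Finset.prod_univ_sum (fun _ : J => (Finset.univ : Finset Bool)) (fun j v => u j v)
  rw [Fintype.piFinset_univ] at this
  rw [← this]
  rw [Finset.prod_eq_one]
  intro j _
  rw [Fintype.sum_bool]
  linarith [hn j]

private lemma harris {J : Type*} [Fintype J] [DecidableEq J] (u : J → Bool → ℝ)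
    (hu : ∀ j v, 0 ≤ u j v) (hn : ∀ j, u j false + u j true = 1) (T : Finset J) :
    ∀ f g : (J → Bool) → ℝ,
    (∀ c c' : J → Bool, (∀ j ∈ T, c j = c' j) → f c = f c') →
    (∀ c c' : J → Bool, (∀ j ∈ T, c j = c' j) → g c = g c') →
    (∀ j : J,
      ((∀ c, f (Function.update c j true) ≤ f (Function.update c j false)) ∧
        (∀ c, g (Function.update c j false) ≤ g (Function.update c j true))) ∨
      ((∀ c, f (Function.update c j false) ≤ f (Function.update c j true)) ∧
        (∀ c, g (Function.update c j true) ≤ g (Function.update c j false))) ∨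
      (∀ c v, f (Function.update c j v) = f c)) →
    (∑ c : J → Bool, (∏ j, u j (c j)) * (f c * g c))
      ≤ (∑ c : J → Bool, (∏ j, u j (c j)) * f c) * (∑ c : J → Bool, (∏ j, u j (c j)) * g c) := by
  induction T using Finset.induction with
  | empty =>
    intro f g hfT hgT _
    have hf : ∀ c, f c = f (fun _ => false) := fun c => hfT c _ (by simp)
    have hg : ∀ c, g c = g (fun _ => false) := fun c => hgT c _ (by simp)
    have e1 : ∑ c : J → Bool, (∏ j, u j (c j)) * (f c * g c)
        = f (fun _ => false) * g (fun _ => false) := by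
      rw [Finset.sum_congr rfl (fun c _ => by rw [hf c, hg c]), ← Finset.sum_mul, sumU u hn,
        one_mul]
    have e2 : ∑ c : J → Bool, (∏ j, u j (c j)) * f c = f (fun _ => false) := by
      rw [Finset.sum_congr rfl (fun c _ => by rw [hf c]), ← Finset.sum_mul, sumU u hn, one_mul]
    have e3 : ∑ c : J → Bool, (∏ j, u j (c j)) * g c = g (fun _ => false) := by
      rw [Finset.sum_congr rfl (fun c _ => by rw [hg c]), ← Finset.sum_mul, sumU u hn, one_mul]
    rw [e1, e2, e3]
  | @insert j T' hj ih =>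
    intro f g hfT hgT hfg
    set ft : (J → Bool) → ℝ := fun c =>
      u j false * f (Function.update c j false) + u j true * f (Function.update c j true) with hft
    set gt : (J → Bool) → ℝ := fun c =>
      u j false * g (Function.update c j false) + u j true * g (Function.update c j true) with hgt
    have hU : ∀ c : J → Bool, 0 ≤ ∏ j', u j' (c j') :=
      fun c => Finset.prod_nonneg fun j' _ => hu j' (c j')
    have step1 : ∀ c : J → Bool,
        u j false * (f (Function.update c j false) * g (Function.update c j false))
          + u j true * (f (Function.update c j true) * g (Function.update c j true))
          ≤ ft c * gt c := by
      intro c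
      refine cheb _ _ _ _ _ _ (hu j false) (hu j true) (hn j) ?_
      rcases hfg j with ⟨h1, h2⟩ | ⟨h1, h2⟩ | h1
      · exact mul_nonpos_of_nonpos_of_nonneg (by linarith [h1 c]) (by linarith [h2 c])
      · exact mul_nonpos_of_nonneg_of_nonpos (by linarith [h1 c]) (by linarith [h2 c])
      · rw [h1 c true, h1 c false, sub_self, zero_mul]
    have hftT' : ∀ c c' : J → Bool, (∀ j' ∈ T', c j' = c' j') → ft c = ft c' := by
      intro c c' h
      have hv : ∀ v, f (Function.update c j v) = f (Function.update c' j v) := by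
        intro v
        refine hfT _ _ fun j'' hj'' => ?_
        rcases Finset.mem_insert.1 hj'' with rfl | hmem
        · simp
        · have hne : j'' ≠ j := fun hh => hj (hh ▸ hmem)
          rw [Function.update_of_ne hne, Function.update_of_ne hne]
          exact h _ hmem
      simp only [hft, hv]
    have hgtT' : ∀ c c' : J → Bool, (∀ j' ∈ T', c j' = c' j') → gt c = gt c' := by
      intro c c' h
      have hv : ∀ v, g (Function.update c j v) = g (Function.update c' j v) := by
        intro v
        refine hgT _ _ fun j'' hj'' => ?_
        rcases Finset.mem_insert.1 hj'' with rfl | hmem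
        · simp
        · have hne : j'' ≠ j := fun hh => hj (hh ▸ hmem)
          rw [Function.update_of_ne hne, Function.update_of_ne hne]
          exact h _ hmem
      simp only [hgt, hv]
    have hfgt : ∀ j'' : J,
        ((∀ c, ft (Function.update c j'' true) ≤ ft (Function.update c j'' false)) ∧
          (∀ c, gt (Function.update c j'' false) ≤ gt (Function.update c j'' true))) ∨
        ((∀ c, ft (Function.update c j'' false) ≤ ft (Function.update c j'' true)) ∧
          (∀ c, gt (Function.update c j'' true) ≤ gt (Function.update c j'' false))) ∨
        (∀ c v, ft (Function.update c j'' v) = ft c) := by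
      intro j''
      by_cases hjj : j'' = j
      · subst hjj
        refine Or.inr (Or.inr fun c v => ?_)
        simp only [hft, Function.update_idem]
      · have hcomm : ∀ (c : J → Bool) (v v' : Bool),
            Function.update (Function.update c j'' v) j v'
              = Function.update (Function.update c j v') j'' v := fun c v v' =>
          Function.update_comm hjj v v' c
        rcases hfg j'' with ⟨h1, h2⟩ | ⟨h1, h2⟩ | h1
        · refine Or.inl ⟨fun c => ?_, fun c => ?_⟩
          · simp only [hft, hcomm]
            gcongr <;> first | exact hu j false | exact hu j true | exact h1 _
          · simp only [hgt, hcomm]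
            gcongr <;> first | exact hu j false | exact hu j true | exact h2 _
        · refine Or.inr (Or.inl ⟨fun c => ?_, fun c => ?_⟩)
          · simp only [hft, hcomm]
            gcongr <;> first | exact hu j false | exact hu j true | exact h1 _
          · simp only [hgt, hcomm]
            gcongr <;> first | exact hu j false | exact hu j true | exact h2 _
        · refine Or.inr (Or.inr fun c v => ?_)
          simp only [hft, hcomm, h1]
    have ihapp := ih ft gt hftT' hgtT' hfgt
    have idfg := id1 u hn j (fun c => f c * g c)
    have idf := id1 u hn j f
    have idg := id1 u hn j g
    calc ∑ c : J → Bool, (∏ j', u j' (c j')) * (f c * g c)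
        = ∑ c : J → Bool, (∏ j', u j' (c j')) *
            (u j false * (f (Function.update c j false) * g (Function.update c j false))
              + u j true * (f (Function.update c j true) * g (Function.update c j true))) := idfg
      _ ≤ ∑ c : J → Bool, (∏ j', u j' (c j')) * (ft c * gt c) := by
          refine Finset.sum_le_sum fun c _ => mul_le_mul_of_nonneg_left (step1 c) (hU c)
      _ ≤ (∑ c : J → Bool, (∏ j', u j' (c j')) * ft c)
            * (∑ c : J → Bool, (∏ j', u j' (c j')) * gt c) := ihapp
      _ = (∑ c : J → Bool, (∏ j', u j' (c j')) * f c)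
            * (∑ c : J → Bool, (∏ j', u j' (c j')) * g c) := by rw [← idf, ← idg]

private def xval {n : ℕ} (b : {q : Fin n × Fin n // q.1 < q.2} → Bool) (i j : Fin n) : ℕ :=
  if h : i < j then (if b ⟨(i, j), h⟩ then 1 else 0)
  else if h' : j < i then (if b ⟨(j, i), h'⟩ then 0 else 1) else 0

private def Gsc {n : ℕ} (b : {q : Fin n × Fin n // q.1 < q.2} → Bool) (i : Fin n) : ℕ :=
  ∑ j ∈ Finset.univ.erase i, xval b i j

private lemma Gsc_mono {n : ℕ} {b b' : {q : Fin n × Fin n // q.1 < q.2} → Bool} {i : Fin n}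
    (h1 : ∀ q : {q : Fin n × Fin n // q.1 < q.2}, q.1.1 = i → b q = true → b' q = true)
    (h2 : ∀ q : {q : Fin n × Fin n // q.1 < q.2}, q.1.2 = i → b' q = true → b q = true) :
    Gsc b i ≤ Gsc b' i := by
  refine Finset.sum_le_sum fun j hj => ?_
  rcases lt_trichotomy i j with h | h | h
  · simp only [xval, dif_pos h]
    cases hb : b ⟨(i, j), h⟩ with
    | false => simp
    | true => rw [h1 ⟨(i, j), h⟩ rfl hb]
  · exact absurd h.symm (Finset.mem_erase.1 hj).1
  · have hni : ¬ i < j := not_lt.2 h.le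
    simp only [xval, dif_neg hni, dif_pos h]
    cases hb' : b' ⟨(j, i), h⟩ with
    | false => cases hb : b ⟨(j, i), h⟩ <;> simp
    | true => rw [h2 ⟨(j, i), h⟩ rfl hb']
open scoped Classical in
private lemma huber {n : ℕ} (w : {q : Fin n × Fin n // q.1 < q.2} → Bool → ℝ)
    (hw0 : ∀ q v, 0 ≤ w q v) (hw1 : ∀ q, w q false + w q true = 1) (k : Fin n → ℝ)
    (S : Finset (Fin n)) :
    ∑ b ∈ Finset.univ.filter
        (fun b : {q : Fin n × Fin n // q.1 < q.2} → Bool => ∀ i ∈ S, (Gsc b i : ℝ) < k i),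
        ∏ q, w q (b q)
      ≤ ∏ i ∈ S, ∑ b ∈ Finset.univ.filter
          (fun b : {q : Fin n × Fin n // q.1 < q.2} → Bool => (Gsc b i : ℝ) < k i),
          ∏ q, w q (b q) := by
  induction S using Finset.induction with
  | empty =>
    simp only [Finset.notMem_empty, false_implies, implies_true, Finset.filter_true,
      Finset.prod_empty]
    rw [sumU w hw1]
  | @insert t S' htS' ih =>
    set f : ({q : Fin n × Fin n // q.1 < q.2} → Bool) → ℝ :=
      fun b => if (Gsc b t : ℝ) < k t then 1 else 0 with hfdef
    set g : ({q : Fin n × Fin n // q.1 < q.2} → Bool) → ℝ :=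
      fun b => if ∀ i ∈ S', (Gsc b i : ℝ) < k i then 1 else 0 with hgdef
    have hindf : ∀ m m' : ℕ, m ≤ m' → ∀ κ : ℝ,
        (if (m' : ℝ) < κ then (1:ℝ) else 0) ≤ (if (m : ℝ) < κ then 1 else 0) := by
      intro m m' hmm κ
      split_ifs with h1 h2
      · exact le_refl 1
      · exact absurd (lt_of_le_of_lt (by exact_mod_cast hmm) h1) h2
      · norm_num
      · exact le_refl 0
    have e1 : ∑ b ∈ Finset.univ.filter
          (fun b : {q : Fin n × Fin n // q.1 < q.2} → Bool =>
            ∀ i ∈ insert t S', (Gsc b i : ℝ) < k i), ∏ q, w q (b q)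
        = ∑ b : {q : Fin n × Fin n // q.1 < q.2} → Bool, (∏ q, w q (b q)) * (f b * g b) := by
      rw [Finset.sum_filter]
      refine Finset.sum_congr rfl fun b _ => ?_
      by_cases h1 : (Gsc b t : ℝ) < k t <;> by_cases h2 : ∀ i ∈ S', (Gsc b i : ℝ) < k i <;>
        simp [hfdef, hgdef, h1, h2, Finset.forall_mem_insert]
    have e2 : ∑ b ∈ Finset.univ.filter
          (fun b : {q : Fin n × Fin n // q.1 < q.2} → Bool => (Gsc b t : ℝ) < k t),
          ∏ q, w q (b q)
        = ∑ b : {q : Fin n × Fin n // q.1 < q.2} → Bool, (∏ q, w q (b q)) * f b := by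
      rw [Finset.sum_filter]
      refine Finset.sum_congr rfl fun b _ => ?_
      by_cases h1 : (Gsc b t : ℝ) < k t <;> simp [hfdef, h1]
    have e3 : ∑ b ∈ Finset.univ.filter
          (fun b : {q : Fin n × Fin n // q.1 < q.2} → Bool => ∀ i ∈ S', (Gsc b i : ℝ) < k i),
          ∏ q, w q (b q)
        = ∑ b : {q : Fin n × Fin n // q.1 < q.2} → Bool, (∏ q, w q (b q)) * g b := by
      rw [Finset.sum_filter]
      refine Finset.sum_congr rfl fun b _ => ?_
      by_cases h2 : ∀ i ∈ S', (Gsc b i : ℝ) < k i <;> simp [hgdef, h2]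
    have hfg : ∀ q : {q : Fin n × Fin n // q.1 < q.2},
        ((∀ c, f (Function.update c q true) ≤ f (Function.update c q false)) ∧
          (∀ c, g (Function.update c q false) ≤ g (Function.update c q true))) ∨
        ((∀ c, f (Function.update c q false) ≤ f (Function.update c q true)) ∧
          (∀ c, g (Function.update c q true) ≤ g (Function.update c q false))) ∨
        (∀ c v, f (Function.update c q v) = f c) := by
      intro q
      by_cases hq1 : q.1.1 = t
      · refine Or.inl ⟨fun c => ?_, fun c => ?_⟩
        · refine hindf _ _ ?_ (k t)
          refine Gsc_mono (fun p hp hbp => ?_) (fun p hp hbp => ?_)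
          · by_cases hpq : p = q
            · subst hpq; simp at hbp
            · rwa [Function.update_of_ne hpq] at hbp ⊢
          · by_cases hpq : p = q
            · exfalso
              rcases hpq with rfl
              have h2 := p.2
              rw [hq1, hp] at h2
              exact lt_irrefl t h2
            · rwa [Function.update_of_ne hpq] at hbp ⊢
        · simp only [hgdef]
          split_ifs with hA hB
          · exact le_refl 1
          · exfalso
            refine hB fun i hi => ?_
            have hit : i ≠ t := fun hh => htS' (hh ▸ hi)
            have hle : Gsc (Function.update c q true) i ≤ Gsc (Function.update c q false) i := by
              refine Gsc_mono (fun p hp hbp => ?_) (fun p hp hbp => ?_)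
              · by_cases hpq : p = q
                · exfalso; exact hit (by rw [← hp, hpq, hq1])
                · rwa [Function.update_of_ne hpq] at hbp ⊢
              · by_cases hpq : p = q
                · subst hpq; simp at hbp
                · rwa [Function.update_of_ne hpq] at hbp ⊢
            exact lt_of_le_of_lt (by exact_mod_cast hle) (hA i hi)
          · norm_num
          · exact le_refl 0
      · by_cases hq2 : q.1.2 = t
        · refine Or.inr (Or.inl ⟨fun c => ?_, fun c => ?_⟩)
          · refine hindf _ _ ?_ (k t)
            refine Gsc_mono (fun p hp hbp => ?_) (fun p hp hbp => ?_)
            · by_cases hpq : p = q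
              · exfalso; exact hq1 (hpq ▸ hp)
              · rwa [Function.update_of_ne hpq] at hbp ⊢
            · by_cases hpq : p = q
              · subst hpq; simp at hbp
              · rwa [Function.update_of_ne hpq] at hbp ⊢
          · simp only [hgdef]
            split_ifs with hA hB
            · exact le_refl 1
            · exfalso
              refine hB fun i hi => ?_
              have hit : i ≠ t := fun hh => htS' (hh ▸ hi)
              have hle : Gsc (Function.update c q false) i
                  ≤ Gsc (Function.update c q true) i := by
                refine Gsc_mono (fun p hp hbp => ?_) (fun p hp hbp => ?_)
                · by_cases hpq : p = q
                  · subst hpq; simp at hbp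
                  · rwa [Function.update_of_ne hpq] at hbp ⊢
                · by_cases hpq : p = q
                  · exfalso; exact hit (by rw [← hp, hpq, hq2])
                  · rwa [Function.update_of_ne hpq] at hbp ⊢
              exact lt_of_le_of_lt (by exact_mod_cast hle) (hA i hi)
            · norm_num
            · exact le_refl 0
        · refine Or.inr (Or.inr fun c v => ?_)
          have hne : ∀ p : {q : Fin n × Fin n // q.1 < q.2},
              p.1.1 = t ∨ p.1.2 = t → p ≠ q := by
            intro p hp hpq
            subst hpq
            rcases hp with h | h
            · exact hq1 h
            · exact hq2 h
          have heq : Gsc (Function.update c q v) t = Gsc c t := by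
            refine le_antisymm (Gsc_mono ?_ ?_) (Gsc_mono ?_ ?_)
            · intro p hp hbp
              rwa [Function.update_of_ne (hne p (Or.inl hp))] at hbp
            · intro p hp hbp
              rwa [Function.update_of_ne (hne p (Or.inr hp))]
            · intro p hp hbp
              rwa [Function.update_of_ne (hne p (Or.inl hp))]
            · intro p hp hbp
              rwa [Function.update_of_ne (hne p (Or.inr hp))] at hbp
          simp only [hfdef, heq]
    have hharris := harris w hw0 hw1 Finset.univ f g
      (fun c c' h => by rw [show c = c' from funext fun j => h j (Finset.mem_univ j)])
      (fun c c' h => by rw [show c = c' from funext fun j => h j (Finset.mem_univ j)])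
      hfg
    have hfnn : 0 ≤ ∑ b : {q : Fin n × Fin n // q.1 < q.2} → Bool, (∏ q, w q (b q)) * f b := by
      refine Finset.sum_nonneg fun b _ =>
        mul_nonneg (Finset.prod_nonneg fun q _ => hw0 q (b q)) ?_
      simp only [hfdef]
      split <;> norm_num
    rw [e1, Finset.prod_insert htS', e2]
    calc ∑ b : {q : Fin n × Fin n // q.1 < q.2} → Bool, (∏ q, w q (b q)) * (f b * g b)
        ≤ (∑ b : {q : Fin n × Fin n // q.1 < q.2} → Bool, (∏ q, w q (b q)) * f b)
            * (∑ b : {q : Fin n × Fin n // q.1 < q.2} → Bool, (∏ q, w q (b q)) * g b) := hharris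
      _ ≤ (∑ b : {q : Fin n × Fin n // q.1 < q.2} → Bool, (∏ q, w q (b q)) * f b)
            * ∏ i ∈ S', ∑ b ∈ Finset.univ.filter
                (fun b : {q : Fin n × Fin n // q.1 < q.2} → Bool => (Gsc b i : ℝ) < k i),
                ∏ q, w q (b q) := by
          refine mul_le_mul_of_nonneg_left ?_ hfnn
          rw [← e3]
          exact ih
set_option maxHeartbeats 1000000 in
theorem stmt10 {Ω : Type*} [MeasureSpace Ω] [IsProbabilityMeasure (ℙ : Measure Ω)]
    (n : ℕ) (hn : 2 ≤ n)
    (X : Fin n → Fin n → Ω → ℕ)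
    (pij : Fin n → Fin n → ℝ)
    (hmeas : ∀ i j, Measurable (X i j))
    (hval : ∀ i j ω, X i j ω ≤ 1)
    (hcomp : ∀ i j, i ≠ j → ∀ ω, X i j ω + X j i ω = 1)
    (hdist : ∀ i j, i ≠ j → (ℙ {ω | X i j ω = 1}).toReal = pij i j)
    (hindep : iIndepFun
        (fun q : {q : Fin n × Fin n // q.1 < q.2} =>
          fun ω => (X q.1.1 q.1.2 ω, X q.1.2 q.1.1 ω)) ℙ)
    (s : Fin n → Ω → ℕ) (hs : ∀ i ω, s i ω = ∑ j ∈ Finset.univ.erase i, X i j ω)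
    (k : Fin n → ℝ) :
    (ℙ {ω | ∀ i, (s i ω : ℝ) < k i}).toReal
      ≤ ∏ i, (ℙ {ω | (s i ω : ℝ) < k i}).toReal := by
  classical
  set Z : Ω → {q : Fin n × Fin n // q.1 < q.2} → Bool :=
    fun ω q => decide (X q.1.1 q.1.2 ω = 1) with hZdef
  have hmeasZ : ∀ (q : {q : Fin n × Fin n // q.1 < q.2}) (v : Bool),
      MeasurableSet {ω | Z ω q = v} := by
    intro q v
    have he : {ω | Z ω q = v} = (fun ω => (X q.1.1 q.1.2 ω, X q.1.2 q.1.1 ω)) ⁻¹'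
        {p : ℕ × ℕ | decide (p.1 = 1) = v} := rfl
    rw [he]
    exact ((hmeas _ _).prodMk (hmeas _ _)) (Set.to_countable _).measurableSet
  have hkey : ∀ b : {q : Fin n × Fin n // q.1 < q.2} → Bool,
      ℙ {ω | Z ω = b} = ∏ q, ℙ {ω | Z ω q = b q} := by
    intro b
    have he : {ω | Z ω = b} = ⋂ q, {ω | Z ω q = b q} := by
      ext ω
      simp [funext_iff]
    rw [he]
    exact hindep.meas_iInter fun q => ⟨{p : ℕ × ℕ | decide (p.1 = 1) = b q},
      (Set.to_countable _).measurableSet, rfl⟩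
  have hdecomp : ∀ P : ({q : Fin n × Fin n // q.1 < q.2} → Bool) → Prop,
      (ℙ {ω | P (Z ω)}).toReal
        = ∑ b ∈ Finset.univ.filter P, ∏ q, (ℙ {ω | Z ω q = b q}).toReal := by
    intro P
    have hsets : {ω | P (Z ω)} = ⋃ b ∈ Finset.univ.filter P, {ω | Z ω = b} := by
      ext ω
      simp only [Set.mem_setOf_eq, Set.mem_iUnion, Finset.mem_filter, Finset.mem_univ, true_and]
      constructor
      · intro h
        exact ⟨Z ω, h, rfl⟩
      · rintro ⟨b, hb, hZb⟩
        have : Z ω = b := hZb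
        rw [this]
        exact hb
    rw [hsets, measure_biUnion_finset ?_ ?_]
    · rw [ENNReal.toReal_sum (fun b _ => measure_ne_top _ _)]
      refine Finset.sum_congr rfl fun b _ => ?_
      rw [hkey b, ENNReal.toReal_prod]
    · intro b _ b' _ hbb'
      refine Set.disjoint_left.2 fun ω h1 h2 => hbb' ?_
      have e1 : Z ω = b := h1
      have e2 : Z ω = b' := h2
      rw [← e1, ← e2]
    · intro b _
      have he : {ω | Z ω = b} = ⋂ q, {ω | Z ω q = b q} := by
        ext ω
        simp [funext_iff]
      rw [he]
      exact MeasurableSet.iInter fun q => hmeasZ q (b q)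
  have hw0 : ∀ (q : {q : Fin n × Fin n // q.1 < q.2}) (v : Bool),
      0 ≤ (ℙ {ω | Z ω q = v}).toReal := fun q v => ENNReal.toReal_nonneg
  have hw1 : ∀ q : {q : Fin n × Fin n // q.1 < q.2},
      (ℙ {ω | Z ω q = false}).toReal + (ℙ {ω | Z ω q = true}).toReal = 1 := by
    intro q
    have hun : {ω | Z ω q = false} = {ω | Z ω q = true}ᶜ := by
      ext ω
      simp
    have hle : ℙ {ω | Z ω q = true} ≤ 1 := prob_le_one
    rw [hun, measure_compl (hmeasZ q true) (measure_ne_top _ _), measure_univ,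
      ENNReal.toReal_sub_of_le hle (by norm_num)]
    simp
  have hscore : ∀ ω i, s i ω = Gsc (Z ω) i := by
    intro ω i
    rw [hs]
    refine Finset.sum_congr rfl fun j hj => ?_
    have hij : j ≠ i := (Finset.mem_erase.1 hj).1
    rcases lt_trichotomy i j with h | h | h
    · simp only [xval, dif_pos h]
      have hv := hval i j ω
      by_cases hx : X i j ω = 1
      · simp [hZdef, hx]
      · have h0 : X i j ω = 0 := by omega
        simp [hZdef, hx, h0]
    · exact absurd h.symm hij
    · have hni : ¬ i < j := not_lt.2 h.le
      simp only [xval, dif_neg hni, dif_pos h]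
      have hv := hval j i ω
      have hc := hcomp j i (fun hh => hij hh) ω
      by_cases hx : X j i ω = 1
      · simp only [hZdef, hx, decide_true, if_true]
        omega
      · have hzf : Z ω ⟨(j, i), h⟩ = false := by simp [hZdef, hx]
        rw [hzf]
        simp only [Bool.false_eq_true, if_false]
        omega
  have hmain := huber (fun q v => (ℙ {ω | Z ω q = v}).toReal) hw0 hw1 k Finset.univ
  refine le_trans (le_of_eq ?_) (le_trans hmain (le_of_eq ?_))
  · have he : {ω | ∀ i, (s i ω : ℝ) < k i}
        = {ω | ∀ i ∈ Finset.univ, ((Gsc (Z ω) i : ℕ) : ℝ) < k i} := by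
      ext ω
      simp [hscore]
    rw [he]
    convert hdecomp (fun b : {q : Fin n × Fin n // q.1 < q.2} → Bool =>
        ∀ i ∈ Finset.univ, (Gsc b i : ℝ) < k i) using 2
    congr! 1
  · refine Finset.prod_congr rfl fun i _ => ?_
    have he : {ω | (s i ω : ℝ) < k i} = {ω | ((Gsc (Z ω) i : ℕ) : ℝ) < k i} := by
      ext ω
      simp [hscore]
    rw [he]
    convert (hdecomp (fun b : {q : Fin n × Fin n // q.1 < q.2} → Bool =>
      (Gsc b i : ℝ) < k i)).symm using 2
end

section
/- Let I_1,...,I_n be {0,1}-valued random variables such that P(Σ I_i = 0) ≤ Π_i P(I_i = 0) holds whenever for each i the conditional distribution of (I_j)_{j≠i} given I_i = 1 is stochastically smaller than the unconditional distribution of (I_j)_{j≠i}. Conclude: if for every i and k, the conditional distribution of (s_j)_{j≠i} given s_i ≥ k is stochastically smaller (coordinatewise, for nondecreasing functions) than the unconditional distribution of (s_j)_{j≠i}, then P(s_1 ≤ k, ..., s_n ≤ k) ≤ P(s_1 ≤ k) · ... · P(s_n ≤ k). -/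
open MeasureTheory ProbabilityTheory Finset

theorem stmt11 {Ω : Type*} [MeasureSpace Ω] [IsProbabilityMeasure (ℙ : Measure Ω)]
    (n : ℕ) (s : Fin n → Ω → ℤ) (hms : ∀ i, Measurable (s i)) (k : ℤ)
    (I : Fin n → Ω → ℕ)
    (hI : ∀ i ω, I i ω = if k < s i ω then 1 else 0)
    -- hypothesis: the product bound for the indicators holds whenever, for each i,
    -- the conditional law of (I_j)_{j≠i} given I_i = 1 is stochastically smaller than
    -- the unconditional law of (I_j)_{j≠i}
    (Hmain :
      (∀ i, ∀ Φ : ({j : Fin n // j ≠ i} → ℕ) → ℝ, Monotone Φ →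
          ∫ ω in {ω | I i ω = 1}, Φ (fun j => I j.1 ω)
            ≤ (ℙ {ω | I i ω = 1}).toReal * ∫ ω, Φ (fun j => I j.1 ω)) →
      (ℙ {ω | ∑ i, I i ω = 0}).toReal ≤ ∏ i, (ℙ {ω | I i ω = 0}).toReal)
    -- assumption: for every i and c, the conditional law of (s_j)_{j≠i} given s_i ≥ c is
    -- stochastically smaller than the unconditional law of (s_j)_{j≠i}
    (Hs : ∀ i, ∀ Φ : ({j : Fin n // j ≠ i} → ℤ) → ℝ, Monotone Φ → ∀ c : ℤ,
        ∫ ω in {ω | c ≤ s i ω}, Φ (fun j => s j.1 ω)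
          ≤ (ℙ {ω | c ≤ s i ω}).toReal * ∫ ω, Φ (fun j => s j.1 ω)) :
    (ℙ {ω | ∀ i, s i ω ≤ k}).toReal ≤ ∏ i, (ℙ {ω | s i ω ≤ k}).toReal := by
  have hset1 : ∀ i : Fin n, {ω | I i ω = 1} = {ω | k + 1 ≤ s i ω} := by
    intro i; ext ω; simp only [Set.mem_setOf_eq, hI]
    by_cases h : k < s i ω
    · simp [h, Int.add_one_le_iff.mpr h]
    · simp [h, not_le.mpr (Int.lt_add_one_iff.mpr (not_lt.mp h))]
  have hpre : ∀ i, ∀ Φ : ({j : Fin n // j ≠ i} → ℕ) → ℝ, Monotone Φ →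
      ∫ ω in {ω | I i ω = 1}, Φ (fun j => I j.1 ω)
        ≤ (ℙ {ω | I i ω = 1}).toReal * ∫ ω, Φ (fun j => I j.1 ω) := by
    intro i Φ hΦ
    set Ψ : ({j : Fin n // j ≠ i} → ℤ) → ℝ := fun x => Φ (fun j => if k < x j then 1 else 0)
    have hΨ : Monotone Ψ := by
      intro x y hxy
      apply hΦ
      intro j
      by_cases h : k < x j
      · simp [h, lt_of_lt_of_le h (hxy j)]
      · simp [h]
    have hs' := Hs i Ψ hΨ (k + 1)
    have heq : ∀ ω, Φ (fun j : {j : Fin n // j ≠ i} => I j.1 ω)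
        = Ψ (fun j => s j.1 ω) := by
      intro ω
      simp only [Ψ]
      congr 1
      funext j
      rw [hI]
    calc ∫ ω in {ω | I i ω = 1}, Φ (fun j => I j.1 ω)
        = ∫ ω in {ω | k + 1 ≤ s i ω}, Ψ (fun j => s j.1 ω) := by
          rw [hset1 i]; exact setIntegral_congr_fun (by
            exact measurableSet_le measurable_const (hms i)) (fun ω _ => heq ω)
      _ ≤ (ℙ {ω | k + 1 ≤ s i ω}).toReal * ∫ ω, Ψ (fun j => s j.1 ω) := hs'
      _ = (ℙ {ω | I i ω = 1}).toReal * ∫ ω, Φ (fun j => I j.1 ω) := by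
          rw [hset1 i]
          congr 1
          exact (integral_congr_ae (Filter.Eventually.of_forall heq)).symm
  have h := Hmain hpre
  have e1 : {ω | ∑ i, I i ω = 0} = {ω | ∀ i, s i ω ≤ k} := by
    ext ω
    simp only [Set.mem_setOf_eq, Finset.sum_eq_zero_iff, Finset.mem_univ, true_implies, hI]
    constructor
    · intro h' i
      by_contra hc
      have := h' i
      simp [not_le.mp hc] at this
    · intro h' i
      simp [not_lt.mpr (h' i)]
  have e2 : ∀ i : Fin n, {ω | I i ω = 0} = {ω | s i ω ≤ k} := by
    intro i; ext ω; simp only [Set.mem_setOf_eq, hI]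
    by_cases hc : k < s i ω
    · simp [hc, not_le.mpr hc]
    · simp [hc, not_lt.mp hc]
  rw [e1] at h
  simp only [e2] at h
  exact h
end
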